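/- arXiv:1811.04642 — 3 statements merged into one kernel-verified Lean document; each statement's English description precedes it below -/
import Mathlib

section
/- Let Π be an abstract pattern space over X and Ξ ⊆ Π a subset that admits a supremum ⋁Ξ with respect to the order ≥ (where P ≥ Q iff P ∧ supp Q = Q). Then supp(⋁Ξ) equals the closure of ⋃_{P∈Ξ} supp P. -/
open Metric Set Pointwise

/-- An abstract pattern space over a (proper) metric space `X`: a set `A` with a
cutting-off operation by closed subsets of `X`, such that cutting twice equals cutting
by the intersection, and each element has a (unique) closed support `supp p` with
`cut p C = p ↔ supp p ⊆ C` for closed `C`. -/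
structure PatternSpace (X : Type*) [MetricSpace X] (A : Type*) where
  cut : A → Set X → A
  supp : A → Set X
  supp_closed : ∀ p : A, IsClosed (supp p)
  cut_cut : ∀ (p : A) (C₁ C₂ : Set X), IsClosed C₁ → IsClosed C₂ →
    cut (cut p C₁) C₂ = cut p (C₁ ∩ C₂)
  cut_eq_self_iff : ∀ (p : A) (C : Set X), IsClosed C → (cut p C = p ↔ supp p ⊆ C)

namespace PatternSpace

variable {X A : Type*} [MetricSpace X]

/-- `S.ge p q` means `p ≥ q`, i.e. `p ∧ supp q = q`. -/
def ge (S : PatternSpace X A) (p q : A) : Prop := S.cut p (S.supp q) = q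

/-- `p` is the supremum of `Ξ ⊆ A` with respect to the order `ge`. -/
def IsSupOf (S : PatternSpace X A) (Ξ : Set A) (p : A) : Prop :=
  (∀ q ∈ Ξ, S.ge p q) ∧ ∀ r : A, (∀ q ∈ Ξ, S.ge r q) → S.ge r p

/-- Two abstract patterns are compatible if some element dominates both. -/
def Compatible (S : PatternSpace X A) (p q : A) : Prop := ∃ r : A, S.ge r p ∧ S.ge r q

def PairwiseCompatible (S : PatternSpace X A) (Ξ : Set A) : Prop :=
  ∀ p ∈ Ξ, ∀ q ∈ Ξ, S.Compatible p q

/-- `Ξ` is locally finite: cutting by any closed ball yields finitely many patterns. -/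
def LocFin (S : PatternSpace X A) (Ξ : Set A) : Prop :=
  ∀ (x : X) (r : ℝ), 0 < r → ((fun p => S.cut p (Metric.closedBall x r)) '' Ξ).Finite

/-- `S` is glueable: every locally finite pairwise compatible subset has a supremum,
and cutting commutes with this supremum. -/
def Glueable (S : PatternSpace X A) : Prop :=
  ∀ Ξ : Set A, S.LocFin Ξ → S.PairwiseCompatible Ξ →
    ∃ p : A, S.IsSupOf Ξ p ∧
      ∀ C : Set X, IsClosed C → S.IsSupOf ((fun q => S.cut q C) '' Ξ) (S.cut p C)

end PatternSpace

namespace PatternSpace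

variable {X A : Type*} [MetricSpace X] (S : PatternSpace X A)

theorem cut_supp_self (p : A) : S.cut p (S.supp p) = p :=
  (S.cut_eq_self_iff p _ (S.supp_closed p)).2 subset_rfl

theorem cut_eq_cut_supp_inter (p : A) {C : Set X} (hC : IsClosed C) :
    S.cut p C = S.cut p (S.supp p ∩ C) := by
  conv_lhs => rw [← S.cut_supp_self p]
  exact S.cut_cut p _ C (S.supp_closed p) hC

theorem supp_cut_subset (p : A) {C : Set X} (hC : IsClosed C) :
    S.supp (S.cut p C) ⊆ S.supp p ∩ C := by
  have hpC : IsClosed (S.supp p ∩ C) := (S.supp_closed p).inter hC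
  refine (S.cut_eq_self_iff _ _ hpC).1 ?_
  rw [S.cut_cut p C _ hC hpC, inter_left_comm, inter_self, ← S.cut_eq_cut_supp_inter p hC]

theorem supp_subset_of_ge {p q : A} (h : S.ge p q) : S.supp q ⊆ S.supp p := by
  rw [← h]
  exact (S.supp_cut_subset p (S.supp_closed q)).trans inter_subset_left

theorem ge_cut_of_supp_subset {p q : A} {C : Set X} (hC : IsClosed C) (h : S.ge p q)
    (hqC : S.supp q ⊆ C) : S.ge (S.cut p C) q := by
  rw [ge, S.cut_cut p C _ hC (S.supp_closed q), inter_eq_self_of_subset_right hqC]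
  exact h

theorem eq_of_ge_of_supp_subset {p q : A} (h : S.ge p q) (hpq : S.supp p ⊆ S.supp q) :
    p = q := by
  rw [← h, (S.cut_eq_self_iff p _ (S.supp_closed q)).2 hpq]

variable {S}

theorem IsSupOf.supp_subset {Ξ : Set A} {P : A} (hP : S.IsSupOf Ξ P) {q : A} (hq : q ∈ Ξ) :
    S.supp q ⊆ S.supp P :=
  S.supp_subset_of_ge (hP.1 q hq)

/-- If `C` is closed and contains every `supp q`, then `P ∧ C` is still an upper bound of `Ξ`,
hence dominates `P`; as its support lies in `supp P`, it is `P` itself. -/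
theorem IsSupOf.supp_subset_of_forall {Ξ : Set A} {P : A} (hP : S.IsSupOf Ξ P) {C : Set X}
    (hC : IsClosed C) (hΞC : ∀ q ∈ Ξ, S.supp q ⊆ C) : S.supp P ⊆ C := by
  have hcut : S.supp (S.cut P C) ⊆ S.supp P ∩ C := S.supp_cut_subset P hC
  have hupper : ∀ q ∈ Ξ, S.ge (S.cut P C) q := fun q hq =>
    S.ge_cut_of_supp_subset hC (hP.1 q hq) (hΞC q hq)
  have hP_eq : S.cut P C = P :=
    S.eq_of_ge_of_supp_subset (hP.2 _ hupper) (hcut.trans inter_subset_left)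
  rw [← hP_eq]
  exact hcut.trans inter_subset_right

end PatternSpace

theorem stmt4_general {X A : Type*} [MetricSpace X]
    (S : PatternSpace X A) (Ξ : Set A) (P : A) (h : S.IsSupOf Ξ P) :
    S.supp P = closure (⋃ Q ∈ Ξ, S.supp Q) := by
  apply Subset.antisymm
  · refine h.supp_subset_of_forall isClosed_closure fun Q hQ => ?_
    exact (subset_biUnion_of_mem (u := S.supp) hQ).trans subset_closure
  · rw [(S.supp_closed P).closure_subset_iff]
    exact iUnion₂_subset fun Q hQ => h.supp_subset hQ

/-- Lemma 2.19: if `Ξ ⊆ Π` admits a supremum `⋁Ξ` (w.r.t. the order `ge`), then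
`supp (⋁Ξ) = closure (⋃_{P ∈ Ξ} supp P)`. -/
theorem stmt4 {X A : Type*} [MetricSpace X] [ProperSpace X] [Nonempty A]
    (S : PatternSpace X A) (Ξ : Set A) (P : A) (h : S.IsSupOf Ξ P) :
    S.supp P = closure (⋃ Q ∈ Ξ, S.supp Q) :=
  stmt4_general S Ξ P h
end

section
/- On the abstract pattern space Map(ℝ, ℂ, 0) of all functions ℝ → ℂ, with ℝ acting on itself by translations and trivially on ℂ, the local matching topology is not Hausdorff: the characteristic functions 1_ℚ and 1_{ℚ+a}, for any irrational a, form a pair belonging to every entourage U_{K,V}. -/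
open scoped Classical

/-- The cutting-off operation of `Map(ℝ, ℂ, 0)`: `(f ∧ C)(x) = f x` if `x ∈ C`
and `= 0` otherwise. -/
noncomputable def cutFn (f : ℝ → ℂ) (C : Set ℝ) : ℝ → ℂ :=
  fun x => if x ∈ C then f x else 0

/-- The translation action of `ℝ` on `Map(ℝ, ℂ, 0)`: `(γ f)(x) = f (x - γ)`. -/
def translFn (γ : ℝ) (f : ℝ → ℂ) : ℝ → ℂ := fun x => f (x - γ)

/-- The characteristic function `1_ℚ` of the rationals. -/
noncomputable def indQ : ℝ → ℂ := fun x => if ∃ q : ℚ, (q : ℝ) = x then 1 else 0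

/-- The characteristic function `1_{ℚ + a}`. -/
noncomputable def indQa (a : ℝ) : ℝ → ℂ := fun x => if ∃ q : ℚ, (q : ℝ) + a = x then 1 else 0

theorem translFn_indQa (a γ : ℝ) : translFn γ (indQa a) = indQa (a + γ) := by
  funext x
  simp only [translFn, indQa]
  congr 1
  exact propext <| exists_congr fun q => by constructor <;> intro h <;> linarith

theorem indQa_ratCast (r : ℚ) : indQa r = indQ := by
  funext x
  simp only [indQa, indQ]
  congr 1
  refine propext ⟨fun ⟨q, hq⟩ => ⟨q + r, by push_cast; exact hq⟩,
    fun ⟨q, hq⟩ => ⟨q - r, by push_cast; linarith⟩⟩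

theorem indQ_ne_indQa {a : ℝ} (ha : Irrational a) : indQ ≠ indQa a := by
  intro h
  have h0 := congrFun h 0
  have hQ : ∃ q : ℚ, (q : ℝ) = 0 := ⟨0, Rat.cast_zero⟩
  have hQa : ¬ ∃ q : ℚ, (q : ℝ) + a = 0 := fun ⟨q, hq⟩ =>
    ha.ne_rat (-q) (by push_cast; linarith)
  simp only [indQ, indQa, if_pos hQ, if_neg hQa] at h0
  exact one_ne_zero h0

theorem exists_ratCast_sub_mem (a : ℝ) {V : Set ℝ} (hV : V ∈ nhds (0 : ℝ)) :
    ∃ r : ℚ, (r : ℝ) - a ∈ V := by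
  obtain ⟨ε, hε, hball⟩ := Metric.mem_nhds_iff.mp hV
  obtain ⟨r, hr⟩ := exists_rat_near a hε
  exact ⟨r, hball (by simpa [Real.dist_eq, abs_sub_comm] using hr)⟩

/-- Lemma 3.9: on `Map(ℝ, ℂ, 0)` (with `ℝ` acting by translations and trivially on
`ℂ`), the local matching topology is not Hausdorff: for any irrational `a`, the
distinct characteristic functions `1_ℚ` and `1_{ℚ+a}` form a pair belonging to every
entourage `U_{K,V}` (for `K ⊆ ℝ` compact and `V` a compact neighborhood of `0`). -/
theorem stmt13 (a : ℝ) (ha : Irrational a) :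
    indQ ≠ indQa a ∧
    ∀ (K V : Set ℝ), IsCompact K → IsCompact V → V ∈ nhds (0 : ℝ) →
      ∃ γ ∈ V, cutFn indQ K = cutFn (translFn γ (indQa a)) K := by
  refine ⟨indQ_ne_indQa ha, fun K V _ _ hV => ?_⟩
  obtain ⟨r, hr⟩ := exists_ratCast_sub_mem a hV
  -- Translating by `r - a` carries `ℚ + a` onto `ℚ` exactly, so the patterns agree on all of `ℝ`.
  refine ⟨r - a, hr, ?_⟩
  rw [translFn_indQa, add_sub_cancel, indQa_ratCast]
end

section
/- Let I be a nonempty set. On the product Γ-abstract pattern space ∏_{i∈I} C(X), where C(X) is the space of closed subsets of X with intersection as cutting-off operation and the Γ-action inherited from the action on X, the local matching topology is Hausdorff: if D = (D_i)_i and E = (E_i)_i satisfy (D,E) ∈ U_{K,V} for every compact K ⊆ X and every compact neighborhood V of e ∈ Γ, then D = E. -/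
/-!
Fix a coordinate `i` and a point `x`. Matching on the compact set `{x}` with `γ` close to the
identity puts `γ⁻¹ • x` into `E i`, while matching on the compact orbit piece `V₀ • x`
(`V₀` a compact neighbourhood of the identity) puts `γ • x` into `D i` whenever `x ∈ E i`.
As `γ → 1` both points tend to `x`, so closedness gives `D i ⊆ E i` and `E i ⊆ D i`.
-/

open Filter Topology Pointwise

theorem Filter.frequently_nhds_of_forall_isCompact {α : Type*} [TopologicalSpace α]
    [LocallyCompactSpace α] {a : α} {p : α → Prop}
    (h : ∀ V : Set α, IsCompact V → V ∈ 𝓝 a → ∃ x ∈ V, p x) : ∃ᶠ x in 𝓝 a, p x := by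
  refine frequently_iff.2 fun hU => ?_
  obtain ⟨V, ⟨hV, hVc⟩, hVU⟩ := (compact_basis_nhds a).mem_iff.1 hU
  obtain ⟨x, hxV, hx⟩ := h V hVc hV
  exact ⟨x, hVU hxV, hx⟩

section LocalMatching

variable {Γ X : Type*} [TopologicalSpace Γ] [TopologicalSpace X]

theorem IsClosed.mem_of_frequently_smul_mem [Monoid Γ] [MulAction Γ X] [ContinuousSMul Γ X]
    {B : Set X} {x : X} (hB : IsClosed B) (hx : ∃ᶠ γ in 𝓝 (1 : Γ), γ • x ∈ B) : x ∈ B :=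
  hB.mem_of_frequently_of_tendsto hx <|
    (continuous_id.smul continuous_const).tendsto' 1 x (one_smul Γ x)

theorem IsClosed.mem_of_frequently_mem_smul [Group Γ] [IsTopologicalGroup Γ] [MulAction Γ X]
    [ContinuousSMul Γ X] {B : Set X} {x : X} (hB : IsClosed B)
    (hx : ∃ᶠ γ in 𝓝 (1 : Γ), x ∈ γ • B) : x ∈ B :=
  hB.mem_of_frequently_of_tendsto (hx.mono fun _ => Set.mem_smul_set_iff_inv_smul_mem.1) <|
    (continuous_inv.smul continuous_const).tendsto' 1 x (by simp)

variable [Group Γ] [MulAction Γ X] [ContinuousSMul Γ X] {A B : Set X}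

theorem subset_of_frequently_inter_eq_smul_inter [IsTopologicalGroup Γ] (hB : IsClosed B)
    (h : ∀ K : Set X, IsCompact K → ∃ᶠ γ in 𝓝 (1 : Γ), A ∩ K = γ • B ∩ K) : A ⊆ B := by
  intro x hx
  refine hB.mem_of_frequently_mem_smul ((h {x} isCompact_singleton).mono fun γ hγ => ?_)
  have hx' : x ∈ γ • B ∩ {x} := hγ ▸ ⟨hx, rfl⟩
  exact hx'.1

theorem subset_of_frequently_smul_inter_eq_inter [WeaklyLocallyCompactSpace Γ] (hA : IsClosed A)
    (h : ∀ K : Set X, IsCompact K → ∃ᶠ γ in 𝓝 (1 : Γ), A ∩ K = γ • B ∩ K) : B ⊆ A := by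
  intro x hx
  obtain ⟨V₀, hV₀c, hV₀⟩ := exists_compact_mem_nhds (1 : Γ)
  have hK : IsCompact ((· • x) '' V₀) := hV₀c.image (continuous_id.smul continuous_const)
  refine hA.mem_of_frequently_smul_mem (((h _ hK).and_eventually hV₀).mono ?_)
  rintro γ ⟨hγ, hγV₀⟩
  have hγx : γ • x ∈ A ∩ (· • x) '' V₀ :=
    hγ ▸ ⟨Set.smul_mem_smul_set hx, Set.mem_image_of_mem _ hγV₀⟩
  exact hγx.1

theorem eq_of_frequently_inter_eq_smul_inter [IsTopologicalGroup Γ] [WeaklyLocallyCompactSpace Γ]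
    (hA : IsClosed A) (hB : IsClosed B)
    (h : ∀ K : Set X, IsCompact K → ∃ᶠ γ in 𝓝 (1 : Γ), A ∩ K = γ • B ∩ K) : A = B :=
  (subset_of_frequently_inter_eq_smul_inter hB h).antisymm
    (subset_of_frequently_smul_inter_eq_inter hA h)

end LocalMatching

theorem stmt16_general {X Γ I : Type*} [MetricSpace X]
    [MetricSpace Γ] [ProperSpace Γ] [Group Γ] [IsTopologicalGroup Γ]
    [MulAction Γ X] [ContinuousSMul Γ X]
    (D E : I → Set X) (hD : ∀ i, IsClosed (D i)) (hE : ∀ i, IsClosed (E i))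
    (h : ∀ (K : Set X) (V : Set Γ), IsCompact K → IsCompact V → V ∈ nhds (1 : Γ) →
      ∃ γ ∈ V, ∀ i : I, D i ∩ K = (γ • E i) ∩ K) :
    D = E := by
  funext i
  refine eq_of_frequently_inter_eq_smul_inter (Γ := Γ) (hD i) (hE i) fun K hK => ?_
  exact frequently_nhds_of_forall_isCompact fun V hV hV1 =>
    (h K V hK hV hV1).imp fun _ hγ => ⟨hγ.1, hγ.2 i⟩

/-- Lemma 3.12: on the product `∏_{i ∈ I} C(X)` of copies of the space of closed
subsets of `X` (with intersection as cutting-off operation and the `Γ`-action inherited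
from the action on `X`), the local matching topology is Hausdorff: if
`(D, E) ∈ U_{K,V}` for every compact `K ⊆ X` and every compact neighborhood `V` of the
identity of `Γ` — i.e. there is `γ ∈ V` with `D_i ∩ K = (γ E_i) ∩ K` for all `i` —
then `D = E`. -/
theorem stmt16 {X Γ I : Type*} [MetricSpace X] [ProperSpace X] [Nonempty I]
    [MetricSpace Γ] [ProperSpace Γ] [Group Γ] [IsTopologicalGroup Γ] [IsIsometricSMul Γ Γ]
    [MulAction Γ X] [IsIsometricSMul Γ X] [ContinuousSMul Γ X]
    (D E : I → Set X) (hD : ∀ i, IsClosed (D i)) (hE : ∀ i, IsClosed (E i))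
    (h : ∀ (K : Set X) (V : Set Γ), IsCompact K → IsCompact V → V ∈ nhds (1 : Γ) →
      ∃ γ ∈ V, ∀ i : I, D i ∩ K = (γ • E i) ∩ K) :
    D = E :=
  stmt16_general D E hD hE h
end
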